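/- Let L be a real symmetric N×N matrix with orthonormal eigenvectors v⁽¹⁾, ..., v⁽ᴺ⁾ and eigenvalues λ_j ∈ [0, 2], let 0 < c < √2, and define ζ_j ∈ [0, π) by cos(ζ_j) = 1 − c²λ_j/2. Suppose u(t) satisfies the recurrence u(t) = 2u(t−1) − u(t−2) − c²·L·u(t−1) for t ≥ 1 with u(−1) = u(0) = u₀. Then for all t ≥ 0, u(t) = Σ_{j=1}^N (u₀ᵀv⁽ʲ⁾)·(p_j·e^{itζ_j} + q_j·e^{−itζ_j})·v⁽ʲ⁾, where p_j = (1 + i·tan(ζ_j/2))/2 and q_j = (1 − i·tan(ζ_j/2))/2. -/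

import Mathlib

/-!
Project the recurrence onto the eigenvector `v j`: by symmetry of `L`, the coefficient
`a_j(t) = u(t) ⬝ᵥ v j` satisfies the scalar recurrence `a(t) = 2 cos ζ_j · a(t-1) - a(t-2)`, since
`2 - c² λ_j = 2 cos ζ_j`. Every `p e^{itζ} + q e^{-itζ}` solves this recurrence, and the choice
`p, q = (1 ± i tan(ζ/2))/2` makes it equal to `1` at both `t = 0` and `t = -1` (this is
`cos ζ + tan(ζ/2) sin ζ = 1`). A two-step recurrence is determined by two initial values, so
`a_j(t) = (u₀ ⬝ᵥ v j)(p_j e^{itζ_j} + q_j e^{-itζ_j})`, and the orthonormal expansion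
`u(t) = ∑_j a_j(t) v j` gives the formula.
-/

open Matrix

theorem Real.cos_add_tan_half_mul_sin {z : ℝ} (h : Real.cos (z / 2) ≠ 0) :
    Real.cos z + Real.tan (z / 2) * Real.sin z = 1 := by
  obtain ⟨w, rfl⟩ : ∃ w, z = 2 * w := ⟨z / 2, by ring⟩
  rw [mul_div_cancel_left₀ w two_ne_zero] at h ⊢
  rw [Real.tan_eq_sin_div_cos, Real.cos_two_mul', Real.sin_two_mul]
  field_simp
  linear_combination Real.sin_sq_add_cos_sq w

theorem sum_dotProduct_mul_apply_of_orthonormal {n R : Type*} [Fintype n] [DecidableEq n]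
    [CommRing R] {v : n → n → R} (horth : ∀ i k, v i ⬝ᵥ v k = if i = k then 1 else 0)
    (x : n → R) (l : n) :
    ∑ j, (x ⬝ᵥ v j) * v j l = x l := by
  have hV : Matrix.of v * (Matrix.of v)ᵀ = 1 := by
    ext i k
    simpa [Matrix.mul_apply, dotProduct, Matrix.one_apply] using horth i k
  have hx : (Matrix.of v)ᵀ *ᵥ (Matrix.of v *ᵥ x) = x := by
    rw [mulVec_mulVec, mul_eq_one_comm.mp hV, one_mulVec]
  calc ∑ j, (x ⬝ᵥ v j) * v j l = ((Matrix.of v)ᵀ *ᵥ (Matrix.of v *ᵥ x)) l := by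
        simp [mulVec, dotProduct, mul_comm]
    _ = x l := by rw [hx]

theorem mulVec_dotProduct_of_eigenvector {n R : Type*} [Fintype n] [CommRing R]
    {L : Matrix n n R} (hL : Lᵀ = L) {v : n → R} {μ : R} (hv : L *ᵥ v = μ • v) (y : n → R) :
    L *ᵥ y ⬝ᵥ v = μ * (y ⬝ᵥ v) := by
  rw [dotProduct_comm, dotProduct_mulVec, ← mulVec_transpose, hL, hv, smul_dotProduct,
    smul_eq_mul, dotProduct_comm]

theorem eq_of_two_step_recurrence {R : Type*} [Semiring R] (a b : R) {f g : ℤ → R}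
    (hf : ∀ t, 1 ≤ t → f t = a * f (t - 1) + b * f (t - 2))
    (hg : ∀ t, 1 ≤ t → g t = a * g (t - 1) + b * g (t - 2))
    (hm1 : f (-1) = g (-1)) (h0 : f 0 = g 0) : ∀ t, 0 ≤ t → f t = g t := by
  have key : ∀ n : ℕ, f (n - 1) = g (n - 1) ∧ f n = g n := by
    intro n
    induction n with
    | zero => simpa using ⟨hm1, h0⟩
    | succ n ih =>
      have hn : (1 : ℤ) ≤ (n + 1 : ℕ) := by omega
      refine ⟨by simpa using ih.2, ?_⟩
      rw [hf _ hn, hg _ hn]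
      push_cast
      rw [add_sub_cancel_right, show (n : ℤ) + 1 - 2 = n - 1 by ring, ih.1, ih.2]
  intro t ht
  lift t to ℕ using ht
  exact (key t).2

noncomputable def waveMode (p q : ℂ) (z : ℝ) (t : ℤ) : ℂ :=
  p * Complex.exp (Complex.I * t * z) + q * Complex.exp (-(Complex.I * t * z))

theorem waveMode_zero (p q : ℂ) (z : ℝ) : waveMode p q z 0 = p + q := by
  simp [waveMode]

theorem waveMode_recurrence (p q : ℂ) (z : ℝ) (t : ℤ) :
    waveMode p q z t =
      ((2 * Real.cos z : ℝ) : ℂ) * waveMode p q z (t - 1) + (-1) * waveMode p q z (t - 2) := by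
  have hcos : ((2 * Real.cos z : ℝ) : ℂ) =
      Complex.exp (Complex.I * z) + Complex.exp (-(Complex.I * z)) := by
    push_cast
    rw [Complex.two_cos, mul_comm, neg_mul, mul_comm]
  have hshift : ∀ s : ℤ, Complex.I * s * z = Complex.I * (s - 1 : ℤ) * z + Complex.I * z := by
    intro s; push_cast; ring
  simp only [waveMode, hcos]
  rw [hshift t, hshift (t - 1), show t - 1 - 1 = t - 2 by ring]
  set e := Complex.exp (Complex.I * z)
  set X := Complex.exp (Complex.I * (t - 2 : ℤ) * z)
  have he : e * Complex.exp (-(Complex.I * z)) = 1 := by rw [← Complex.exp_add]; simp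
  simp only [neg_add, Complex.exp_add]
  linear_combination (-(p * X) - q * Complex.exp (-(Complex.I * (t - 2 : ℤ) * z))) * he

theorem waveMode_neg_one {z : ℝ} (h : Real.cos (z / 2) ≠ 0) :
    waveMode ((1 + Complex.I * (Real.tan (z / 2) : ℝ)) / 2)
      ((1 - Complex.I * (Real.tan (z / 2) : ℝ)) / 2) z (-1) = 1 := by
  have hid : (Real.cos z : ℂ) + (Real.tan (z / 2) : ℂ) * Real.sin z = 1 := by
    exact_mod_cast Real.cos_add_tan_half_mul_sin h
  have hm : Complex.I * ((-1 : ℤ) : ℂ) * z = (-z : ℝ) * Complex.I := by push_cast; ring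
  have hp : -(Complex.I * ((-1 : ℤ) : ℂ) * z) = z * Complex.I := by push_cast; ring
  rw [waveMode, hp, hm, Complex.exp_mul_I, Complex.exp_mul_I, ← Complex.ofReal_cos,
    ← Complex.ofReal_sin, ← Complex.ofReal_cos, ← Complex.ofReal_sin, Real.cos_neg, Real.sin_neg,
    Complex.ofReal_neg]
  linear_combination hid - (Real.tan (z / 2) * Real.sin z : ℂ) * Complex.I_sq

theorem discrete_wave_equation_closed_form_general {N : ℕ}
    (L : Matrix (Fin N) (Fin N) ℝ) (hLsym : Lᵀ = L)
    (v : Fin N → Fin N → ℝ) (lam : Fin N → ℝ)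
    (horth : ∀ i k, v i ⬝ᵥ v k = if i = k then 1 else 0)
    (heig : ∀ j, L.mulVec (v j) = lam j • v j)
    (c : ℝ)
    (ζ : Fin N → ℝ) (hζrange : ∀ j, ζ j ∈ Set.Ico 0 Real.pi)
    (hζ : ∀ j, Real.cos (ζ j) = 1 - c ^ 2 * lam j / 2)
    (p q : Fin N → ℂ)
    (hp : ∀ j, p j = (1 + Complex.I * (Real.tan (ζ j / 2) : ℝ)) / 2)
    (hq : ∀ j, q j = (1 - Complex.I * (Real.tan (ζ j / 2) : ℝ)) / 2)
    (u₀ : Fin N → ℝ) (u : ℤ → Fin N → ℝ)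
    (hinit0 : u (-1) = u₀) (hinit1 : u 0 = u₀)
    (hrec : ∀ t : ℤ, 1 ≤ t →
      u t = 2 • u (t - 1) - u (t - 2) - c ^ 2 • L.mulVec (u (t - 1))) :
    ∀ t : ℤ, 0 ≤ t → ∀ l : Fin N,
      ((u t l : ℂ)) = ∑ j, ((u₀ ⬝ᵥ v j : ℝ) : ℂ) *
        (p j * Complex.exp (Complex.I * (t : ℤ) * (ζ j : ℝ)) +
         q j * Complex.exp (-(Complex.I * (t : ℤ) * (ζ j : ℝ)))) * ((v j l : ℝ) : ℂ) := by
  have hcoeff : ∀ j t, 0 ≤ t →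
      ((u t ⬝ᵥ v j : ℝ) : ℂ) = (u₀ ⬝ᵥ v j : ℝ) * waveMode (p j) (q j) (ζ j) t := by
    intro j
    have hhalf : Real.cos (ζ j / 2) ≠ 0 := (Real.cos_pos_of_mem_Ioo
      ⟨by linarith [(hζrange j).1, Real.pi_pos], by linarith [(hζrange j).2]⟩).ne'
    refine eq_of_two_step_recurrence ((2 * Real.cos (ζ j) : ℝ) : ℂ) (-1) (fun s hs => ?_)
      (fun s _ => ?_) ?_ ?_
    · rw [hrec s hs]
      simp only [sub_dotProduct, smul_dotProduct, smul_eq_mul, two_smul, add_dotProduct,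
        mulVec_dotProduct_of_eigenvector hLsym (heig j), hζ j]
      push_cast
      ring
    · rw [waveMode_recurrence]
      ring
    · rw [hinit0, hp, hq, waveMode_neg_one hhalf, mul_one]
    · rw [hinit1, waveMode_zero, hp, hq]
      ring
  intro t ht l
  calc ((u t l : ℝ) : ℂ) = ((∑ j, (u t ⬝ᵥ v j) * v j l : ℝ) : ℂ) := by
        rw [sum_dotProduct_mul_apply_of_orthonormal horth]
    _ = ∑ j, ((u t ⬝ᵥ v j : ℝ) : ℂ) * ((v j l : ℝ) : ℂ) := by push_cast; rfl
    _ = _ := Finset.sum_congr rfl fun j _ => by rw [hcoeff j t ht, waveMode]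

/-- Closed-form solution of the discrete wave equation on a graph with symmetric
Laplacian L, zero initial velocity (u(−1) = u(0) = u₀) and wave speed 0 < c < √2. -/
theorem discrete_wave_equation_closed_form {N : ℕ}
    (L : Matrix (Fin N) (Fin N) ℝ) (hLsym : Lᵀ = L)
    (v : Fin N → Fin N → ℝ) (lam : Fin N → ℝ)
    (horth : ∀ i k, v i ⬝ᵥ v k = if i = k then 1 else 0)
    (heig : ∀ j, L.mulVec (v j) = lam j • v j)
    (hlam : ∀ j, lam j ∈ Set.Icc (0 : ℝ) 2)
    (c : ℝ) (hc0 : 0 < c) (hc2 : c < Real.sqrt 2)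
    (ζ : Fin N → ℝ) (hζrange : ∀ j, ζ j ∈ Set.Ico 0 Real.pi)
    (hζ : ∀ j, Real.cos (ζ j) = 1 - c ^ 2 * lam j / 2)
    (p q : Fin N → ℂ)
    (hp : ∀ j, p j = (1 + Complex.I * (Real.tan (ζ j / 2) : ℝ)) / 2)
    (hq : ∀ j, q j = (1 - Complex.I * (Real.tan (ζ j / 2) : ℝ)) / 2)
    (u₀ : Fin N → ℝ) (u : ℤ → Fin N → ℝ)
    (hinit0 : u (-1) = u₀) (hinit1 : u 0 = u₀)
    (hrec : ∀ t : ℤ, 1 ≤ t →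
      u t = 2 • u (t - 1) - u (t - 2) - c ^ 2 • L.mulVec (u (t - 1))) :
    ∀ t : ℤ, 0 ≤ t → ∀ l : Fin N,
      ((u t l : ℂ)) = ∑ j, ((u₀ ⬝ᵥ v j : ℝ) : ℂ) *
        (p j * Complex.exp (Complex.I * (t : ℤ) * (ζ j : ℝ)) +
         q j * Complex.exp (-(Complex.I * (t : ℤ) * (ζ j : ℝ)))) * ((v j l : ℝ) : ℂ) :=
  discrete_wave_equation_closed_form_general L hLsym v lam horth heig c ζ hζrange hζ p q hp hq u₀ u
    hinit0 hinit1 hrec
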